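/- Let $k$ be a perfect field of characteristic $p>0$, $R=k[x_1,\dots,x_n]$, $F:R_s\to R_t$ the Frobenius, $M$ an $R_t$-module and $N$ an $R_s$-module. An $R_s$-linear map $g:M\to F^*(N)=R_t\otimes_{R_s}N$, written as $g=\oplus_{\bar i}(e_{\bar i}\otimes g_{\bar i})$ with $g_{\bar i}:F_*(M)\to N$ $R_s$-linear, is $R_t$-linear if and only if $g_{\bar i}(m)=g_{\overline{p-1}}(e_{\overline{p-1}-\bar i}\, m)$ for every multi-index $\bar i$ with $0\le i_j<p$ and every $m\in M$. -/

import Mathlib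

open MvPolynomial TensorProduct

noncomputable section

variable (p n : ℕ) [Fact p.Prime] (k : Type*) [Field k] [CharP k p] [PerfectField k]

/-- The source copy of the polynomial ring. -/
abbrev Rs := MvPolynomial (Fin n) k

/-- The target copy of the polynomial ring (`p` is a phantom parameter recording that we will
view it as an `Rs`-algebra via the Frobenius). -/
def Rt (_ : ℕ) := MvPolynomial (Fin n) k

instance : CommRing (Rt n k p) := inferInstanceAs (CommRing (MvPolynomial (Fin n) k))

/-- The identity of the underlying ring, viewed as a map from the source copy to the target. -/
def toRt : Rs n k →+* Rt n k p := RingHom.id (MvPolynomial (Fin n) k)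

/-- The Frobenius map from the source copy to the target copy. -/
def frobTo : Rs n k →+* Rt n k p := (toRt p n k).comp (frobenius (MvPolynomial (Fin n) k) p)

instance : Algebra (Rs n k) (Rt n k p) := (frobTo p n k).toAlgebra

instance : NeZero p := ⟨(Fact.out : p.Prime).ne_zero⟩

/-- The monomial basis elements `x₁^{i₁} ⋯ xₙ^{iₙ}`, `0 ≤ iⱼ < p`. -/
def eMon (i : Fin n → Fin p) : Rt n k p := toRt p n k (∏ j, X j ^ (i j : ℕ))

/-- The multi-index `(p-1, …, p-1)`. -/
def topIdx : Fin n → Fin p := fun _ => (0 : Fin p).rev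

/-- The complementary multi-index `p-1 - ī`. -/
def revIdx (i : Fin n → Fin p) : Fin n → Fin p := fun j => (i j).rev

/-!
Along the monomial basis `e_ī` of `Rt` over `Rs`, every coordinate of `Rt ⊗[Rs] N` is read off
from the top one: the `ī`-th coordinate of `x` is the `(p-1,…,p-1)`-th coordinate of
`e_{p-1-ī} • x`, since the top monomial occurs in `e_{p-1-ī} e_j` (with coefficient 1) exactly
when `j = ī`. So an `Rt`-linear `g` satisfies `g_ī(m) = g_top(e_{p-1-ī} m)`. Conversely, these
relations make `r ↦ (top coordinate of r • g(m))` and `r ↦ g_top(r m)` agree on the basis, hence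
everywhere, and then all coordinates of `g(r m)` and `r • g(m)` agree.

The monomials form a basis because `s • e_ī = s^p e_ī` is supported on exponents `≡ ī mod p`,
while `x^d = (x^⌊d/p⌋)^p e_{d mod p}` and `k` is perfect.
-/

section BasisDuality

variable {S T ι : Type*} [CommRing S] [CommRing T] [Algebra S T] [DecidableEq ι]
  (b : Module.Basis ι S T) {N : Type*} [AddCommGroup N] [Module S N]

lemma equivFinsuppOfBasisLeft_sum_tmul [Fintype ι] (x : ι → N) (i : ι) :
    equivFinsuppOfBasisLeft b (∑ j, b j ⊗ₜ[S] x j) i = x i := by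
  simp [Finsupp.single_apply]

variable {σ : ι → ι} {top : ι} (hdual : ∀ i t, b.repr t i = b.repr (b (σ i) * t) top)
include hdual

lemma equivFinsuppOfBasisLeft_eq_apply_smul (i : ι) (x : T ⊗[S] N) :
    equivFinsuppOfBasisLeft b x i = equivFinsuppOfBasisLeft b (b (σ i) • x) top := by
  induction x with
  | zero => simp
  | tmul t y => simp [smul_tmul', hdual i t]
  | add x y hx hy => simp only [map_add, Finsupp.add_apply, smul_add, hx, hy]

variable [Fintype ι] {M : Type*} [AddCommGroup M] [Module T M] [Module S M] [IsScalarTower S T M]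

lemma equivFinsuppOfBasisLeft_smul_sum_tmul (hσ : Function.Involutive σ) (g : ι → M →ₗ[S] N)
    (hg : ∀ i m, g i m = g top (b (σ i) • m)) (t : T) (m : M) :
    equivFinsuppOfBasisLeft b (t • ∑ i, b i ⊗ₜ[S] g i m) top = g top (t • m) := by
  conv_lhs => rw [← b.sum_repr t]
  conv_rhs => rw [← b.sum_repr t]
  simp only [Finset.sum_smul, map_sum, Finsupp.coe_finsetSum, Finset.sum_apply, smul_assoc,
    map_smul, Finsupp.smul_apply]
  refine Finset.sum_congr rfl fun j _ => congrArg (b.repr t j • ·) ?_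
  rw [← hσ j, ← equivFinsuppOfBasisLeft_eq_apply_smul b hdual, equivFinsuppOfBasisLeft_sum_tmul,
    hg, hσ]

theorem sum_basis_tmul_map_smul_iff (hσ : Function.Involutive σ) (g : ι → M →ₗ[S] N) :
    (∀ (t : T) (m : M), ∑ i, b i ⊗ₜ[S] g i (t • m) = t • ∑ i, b i ⊗ₜ[S] g i m) ↔
      ∀ i m, g i m = g top (b (σ i) • m) := by
  constructor
  · intro hlin i m
    rw [← equivFinsuppOfBasisLeft_sum_tmul b (fun j => g j m) i,
      equivFinsuppOfBasisLeft_eq_apply_smul b hdual, ← hlin, equivFinsuppOfBasisLeft_sum_tmul]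
  · intro hg t m
    refine (equivFinsuppOfBasisLeft b).injective (Finsupp.ext fun i => ?_)
    rw [equivFinsuppOfBasisLeft_sum_tmul, equivFinsuppOfBasisLeft_eq_apply_smul b hdual, smul_smul,
      equivFinsuppOfBasisLeft_smul_sum_tmul b hdual hσ g hg, hg, mul_smul]

end BasisDuality

section MonomialArithmetic

omit [PerfectField k]

lemma smul_eq_frobTo_mul (s : Rs n k) (t : Rt n k p) : s • t = frobTo p n k s * t := by
  rw [Algebra.smul_def, RingHom.algebraMap_toAlgebra]

lemma frobTo_apply (s : Rs n k) : frobTo p n k s = toRt p n k (s ^ p) := rfl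

lemma toRt_prod_X_pow (d : Fin n → ℕ) :
    toRt p n k (∏ l, X l ^ d l : Rs n k) =
      (∏ l, X l ^ (d l / p) : Rs n k) • eMon p n k (fun l => Fin.ofNat p (d l)) := by
  rw [smul_eq_frobTo_mul, frobTo_apply, eMon, ← map_mul, ← Finset.prod_pow,
    ← Finset.prod_mul_distrib]
  simp only [← pow_mul, ← pow_add, Fin.val_ofNat, mul_comm _ p, Nat.div_add_mod]

lemma eMon_mul (i j : Fin n → Fin p) :
    eMon p n k i * eMon p n k j =
      (∏ l, X l ^ ((i l + j l : ℕ) / p) : Rs n k) • eMon p n k (i + j) := by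
  have hsum : (fun l => Fin.ofNat p (i l + j l : ℕ)) = i + j := by
    funext l; simp [Fin.ext_iff, Fin.val_add]
  rw [← hsum, ← toRt_prod_X_pow, eMon, eMon, ← map_mul, ← Finset.prod_mul_distrib]
  simp only [← pow_add]

lemma revIdx_add_eq_topIdx_iff (i j : Fin n → Fin p) : revIdx p n i + j = topIdx p n ↔ j = i := by
  simp only [funext_iff, Pi.add_apply, revIdx, topIdx, ← Fin.rev_sub, Fin.rev_inj, sub_eq_zero,
    eq_comm]

lemma eMon_revIdx_mul_self (i : Fin n → Fin p) :
    eMon p n k (revIdx p n i) * eMon p n k i = eMon p n k (topIdx p n) := by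
  rw [eMon_mul, (revIdx_add_eq_topIdx_iff p n i i).2 rfl]
  convert one_smul (Rs n k) _
  refine Finset.prod_eq_one fun l _ => ?_
  rw [Nat.div_eq_of_lt (by simp [revIdx, Fin.val_rev]; omega), pow_zero]

lemma prod_X_pow_eq_monomial_equivFunOnFinite (d : Fin n → ℕ) :
    (∏ l, X l ^ d l : Rs n k) = monomial (Finsupp.equivFunOnFinite.symm d) 1 := by
  rw [monomial_eq, C_1, one_mul, Finsupp.prod_fintype _ _ (fun _ => pow_zero _)]
  rfl

lemma ofNat_eq_of_coeff_pow_mul_ne_zero (q : Rs n k) (i : Fin n → Fin p) (m : Fin n →₀ ℕ)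
    (h : coeff m (q ^ p * ∏ l, X l ^ (i l : ℕ)) ≠ 0) : (fun l => Fin.ofNat p (m l)) = i := by
  rw [prod_X_pow_eq_monomial_equivFunOnFinite, ← map_frobenius_expand, coeff_mul_monomial'] at h
  split_ifs at h with hle
  · rw [mul_one, coeff_map] at h
    funext l
    have hdvd : p ∣ (m - Finsupp.equivFunOnFinite.symm fun l => (i l : ℕ)) l := by
      by_contra hnd
      exact h (by rw [coeff_expand_of_not_dvd _ hnd, map_zero])
    obtain ⟨c, hc⟩ := hdvd
    have hm : m l = i l + p * c := by
      have := hle l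
      simp only [Finsupp.coe_tsub, Pi.sub_apply,
        Finsupp.equivFunOnFinite_symm_apply_apply] at hc this
      omega
    ext
    rw [Fin.val_ofNat, hm, Nat.add_mul_mod_self_left, Nat.mod_eq_of_lt (i l).isLt]
  · exact absurd rfl h

lemma linearIndependent_eMon : LinearIndependent (Rs n k) (eMon p n k) := by
  rw [Fintype.linearIndependent_iff]
  intro g hg i₀
  set P : (Fin n → Fin p) → Rs n k := fun i => g i ^ p * ∏ l, X l ^ (i l : ℕ)
  have hsum : ∑ i, P i = 0 := hg
  have hP : P i₀ = 0 := by
    ext m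
    by_cases hm : (fun l => Fin.ofNat p (m l)) = i₀
    · rw [coeff_zero, ← coeff_zero m, ← hsum, coeff_sum, Finset.sum_eq_single i₀ _ (by simp)]
      intro i _ hi
      by_contra h
      exact hi (hm ▸ (ofNat_eq_of_coeff_pow_mul_ne_zero p n k _ i m h).symm)
    · by_contra h
      exact hm (ofNat_eq_of_coeff_pow_mul_ne_zero p n k _ i₀ m h)
  have hX : (∏ l, X l ^ (i₀ l : ℕ) : Rs n k) ≠ 0 :=
    Finset.prod_ne_zero_iff.2 fun l _ => pow_ne_zero _ (X_ne_zero l)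
  exact pow_eq_zero_iff (NeZero.ne p) |>.1 ((mul_eq_zero.1 hP).resolve_right hX)

end MonomialArithmetic

lemma top_le_span_range_eMon : ⊤ ≤ Submodule.span (Rs n k) (Set.range (eMon p n k)) := by
  rintro (f : Rs n k) -
  induction f using MvPolynomial.induction_on' with
  | monomial d a =>
    obtain ⟨b, rfl⟩ := surjective_frobenius k p a
    have h : toRt p n k (monomial d (frobenius k p b)) =
        (C b * ∏ l, X l ^ (d l / p) : Rs n k) • eMon p n k (fun l => Fin.ofNat p (d l)) := by
      rw [monomial_eq, Finsupp.prod_fintype _ _ (fun _ => pow_zero _), map_mul, toRt_prod_X_pow,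
        mul_smul, smul_eq_frobTo_mul p n k (C b), frobTo_apply, frobenius_def, C_pow]
    exact h ▸ Submodule.smul_mem _ _ (Submodule.subset_span ⟨_, rfl⟩)
  | add f g hf hg => exact Submodule.add_mem _ hf hg

def eMonBasis : Module.Basis (Fin n → Fin p) (Rs n k) (Rt n k p) :=
  .mk (linearIndependent_eMon p n k) (top_le_span_range_eMon p n k)

lemma eMonBasis_apply (i : Fin n → Fin p) : eMonBasis p n k i = eMon p n k i :=
  Module.Basis.mk_apply _ _ _

lemma eMonBasis_repr_eq_repr_revIdx_mul (i : Fin n → Fin p) (t : Rt n k p) :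
    (eMonBasis p n k).repr t i =
      (eMonBasis p n k).repr (eMonBasis p n k (revIdx p n i) * t) (topIdx p n) := by
  suffices (eMonBasis p n k).coord i = (eMonBasis p n k).coord (topIdx p n) ∘ₗ
      LinearMap.mulLeft (Rs n k) (eMonBasis p n k (revIdx p n i)) from
    LinearMap.congr_fun this t
  refine (eMonBasis p n k).ext fun j => ?_
  rw [LinearMap.comp_apply, LinearMap.mulLeft_apply, Module.Basis.coord_apply,
    Module.Basis.coord_apply, Module.Basis.repr_self, Finsupp.single_apply, eMonBasis_apply,
    eMonBasis_apply]
  split_ifs with hji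
  · rw [hji, eMon_revIdx_mul_self, ← eMonBasis_apply, Module.Basis.repr_self,
      Finsupp.single_eq_same]
  · rw [eMon_mul, ← eMonBasis_apply, map_smul, Module.Basis.repr_self, Finsupp.smul_apply,
      Finsupp.single_eq_of_ne (Ne.symm (mt (revIdx_add_eq_topIdx_iff p n i j).1 hji)), smul_zero]

theorem stmt5 (M : Type*) [AddCommGroup M] [Module (Rt n k p) M]
    (N : Type*) [AddCommGroup N] [Module (Rs n k) N] :
    letI : Module (Rs n k) M := Module.compHom M (frobTo p n k)
    ∀ g' : (Fin n → Fin p) → (M →ₗ[Rs n k] N),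
      (∀ (r' : Rt n k p) (m : M),
          (∑ i, eMon p n k i ⊗ₜ[Rs n k] g' i (r' • m)) =
            r' • ∑ i, eMon p n k i ⊗ₜ[Rs n k] g' i m) ↔
        (∀ (i : Fin n → Fin p) (m : M), g' i m = g' (topIdx p n) (eMon p n k (revIdx p n i) • m)) := by
  intro g'
  let inst : Module (Rs n k) M := Module.compHom M (frobTo p n k)
  have : IsScalarTower (Rs n k) (Rt n k p) M :=
    ⟨fun s t m => by rw [smul_eq_frobTo_mul, mul_smul]; rfl⟩
  simpa only [eMonBasis_apply] using sum_basis_tmul_map_smul_iff (eMonBasis p n k)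
    (eMonBasis_repr_eq_repr_revIdx_mul p n k) (fun i => funext fun l => Fin.rev_rev (i l)) g'
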